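/- Let 𝓛 be a finite field extension of a standard d-dimensional local field, with system of local uniformizers T_1,…,T_{d−1}, π_𝓛, and fix n ≥ 1. Set J_n = { ī = (i_1,…,i_{d−1}) : 0 ≤ i_1,…,i_{d−1} < p^n }. Then every x ∈ O_𝓛 can be written as a v_𝓛-convergent series x = Σ_{k=0}^∞ Σ_{ī ∈ J_n} γ_{ī,k}^{p^n} · T_1^{i_1}⋯T_{d−1}^{i_{d−1}} · π_𝓛^k for suitable elements γ_{ī,k} ∈ O_𝓛, i.e. for every m ≥ 0 the difference between x and the partial sum over k ≤ m lies in π_𝓛^{m+1}O_𝓛. -/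

import Mathlib

/-- Axioms for a (rank-one) discrete valuation `v` on a field `F`, written additively with
`v 0 = ⊤` and value group `ℤ`. -/
structure IsDiscVal {F : Type*} [Field F] (v : F → WithTop ℤ) : Prop where
  eq_top_iff : ∀ x, v x = ⊤ ↔ x = 0
  map_mul : ∀ x y, v (x * y) = v x + v y
  min_le_add : ∀ x y, min (v x) (v y) ≤ v (x + y)
  exists_uniformizer : ∃ x, v x = 1

namespace IsDiscVal

variable {F : Type*} [Field F] {v : F → WithTop ℤ}

theorem v_one (hv : IsDiscVal v) : v 1 = 0 := by
  have h1 : v 1 ≠ ⊤ := fun h => one_ne_zero ((hv.eq_top_iff 1).mp h)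
  obtain ⟨n, hn⟩ := WithTop.ne_top_iff_exists.mp h1
  have hmul := hv.map_mul 1 1
  rw [mul_one, ← hn] at hmul
  have hn0 : n = n + n := by exact_mod_cast hmul
  have : n = 0 := by omega
  simp [← hn, this]

theorem v_neg_one (hv : IsDiscVal v) : v (-1) = 0 := by
  have h1 : v (-1) ≠ ⊤ := fun h => (by simp : (-1 : F) ≠ 0) ((hv.eq_top_iff (-1)).mp h)
  obtain ⟨n, hn⟩ := WithTop.ne_top_iff_exists.mp h1
  have hmul := hv.map_mul (-1) (-1)
  rw [neg_one_mul, neg_neg, hv.v_one, ← hn] at hmul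
  have hn0 : n + n = (0 : ℤ) := by exact_mod_cast hmul.symm
  have : n = 0 := by omega
  simp [← hn, this]

theorem v_neg (hv : IsDiscVal v) (x : F) : v (-x) = v x := by
  have h := hv.map_mul (-1) x
  rw [neg_one_mul, hv.v_neg_one, zero_add] at h
  exact h

theorem v_zero (hv : IsDiscVal v) : v 0 = ⊤ := (hv.eq_top_iff 0).mpr rfl

/-- The valuation (sub)ring `O = {x | v x ≥ 0}` of a discretely valued field. -/
noncomputable def subring (hv : IsDiscVal v) : Subring F where
  carrier := {x | 0 ≤ v x}
  zero_mem' := by simp only [Set.mem_setOf_eq, hv.v_zero]; exact le_top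
  one_mem' := by simp [Set.mem_setOf_eq, hv.v_one]
  add_mem' := fun {a b} ha hb => le_trans (le_min ha hb) (hv.min_le_add a b)
  mul_mem' := fun {a b} ha hb => by
    simpa [Set.mem_setOf_eq, hv.map_mul a b] using add_nonneg ha hb
  neg_mem' := fun {a} ha => by
    simpa only [Set.mem_setOf_eq, hv.v_neg a] using ha

theorem mem_subring_iff (hv : IsDiscVal v) (x : F) : x ∈ hv.subring ↔ 0 ≤ v x := Iff.rfl

end IsDiscVal

section LaurentTower
/-!  The iterated Laurent series tower `E_0 = 𝔽`, `E_{j+1} = E_j((T_{j+1}))`, presented as a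
family of fields `E j` with isomorphisms `E (j+1) ≃+* LaurentSeries (E j)`. -/

variable (E : ℕ → Type) [∀ j, Field (E j)]
variable (estep : ∀ j, E (j + 1) ≃+* LaurentSeries (E j))

/-- The constant-coefficient embedding `E_m → E_{m+1}`. -/
noncomputable def stepEmb (m : ℕ) : E m →+* E (m + 1) :=
  ((estep m).symm : LaurentSeries (E m) →+* E (m + 1)).comp
    (HahnSeries.C : E m →+* LaurentSeries (E m))

/-- The iterated constant-coefficient embedding `E_m → E_{m+j}`. -/
noncomputable def upEmb (m : ℕ) : ∀ j : ℕ, E m →+* E (m + j)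
  | 0 => RingHom.id _
  | j + 1 => (stepEmb E estep (m + j)).comp (upEmb m j)

/-- The variable `T_{j+1}` of the `(j+1)`-st layer, viewed in `E_D` (for `j < D`). -/
noncomputable def towerVar (D j : ℕ) (_h : j < D) : E D :=
  cast (congrArg E (by omega : (j + 1) + (D - (j + 1)) = D))
    (upEmb E estep (j + 1) (D - (j + 1))
      ((estep j).symm (HahnSeries.single (1 : ℤ) (1 : E j))))

end LaurentTower

/-!
Modulo `π𝓛` everything happens in the residue field `𝔽((T̄₁))⋯((T̄_{d-1}))`, which is spanned over
its subfield of `p^n`-th powers by the monomials `T̄^ī`, `ī ∈ J_n`. For a single Laurent variable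
this comes from splitting a series according to the residues of its exponents mod `p^n`, together
with the characteristic-`p` identity `g(T)^(p^n) = g^{(p^n)}(T^(p^n))` (coefficients raised to the
`p^n`-th power); at the bottom of the tower the finite field is perfect. Lifting such a
decomposition of the residue of `x` to `O_𝓛` leaves a remainder divisible by `π𝓛`, and iterating
gives the `π𝓛`-adic expansion.
-/

section PowCombination

variable {K : Type*} [CommRing K] {ι : Type*} [Fintype ι]

/-- For `q = p ^ n` in characteristic `p`: `y` lies in the span of `b` over the subring `K ^ q`. -/
def IsPowCombination (q : ℕ) (b : ι → K) (y : K) : Prop :=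
  ∃ c : ι → K, y = ∑ i, c i ^ q * b i

namespace IsPowCombination

variable {q : ℕ} {b : ι → K} {y : K}

theorem pow_mul (h : IsPowCombination q b y) (u : K) : IsPowCombination q b (u ^ q * y) := by
  obtain ⟨c, rfl⟩ := h
  exact ⟨fun i => u * c i, by simp only [Finset.mul_sum, mul_pow, mul_assoc]⟩

theorem map {L : Type*} [CommRing L] (h : IsPowCombination q b y) (φ : K →+* L) :
    IsPowCombination q (φ ∘ b) (φ y) := by
  obtain ⟨c, rfl⟩ := h
  exact ⟨φ ∘ c, by simp⟩

theorem comp_equiv {κ : Type*} [Fintype κ] (h : IsPowCombination q b y) (e : κ ≃ ι) :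
    IsPowCombination q (b ∘ e) y := by
  obtain ⟨c, rfl⟩ := h
  exact ⟨c ∘ e, (e.sum_comp fun i => c i ^ q * b i).symm⟩

theorem sum_mul {J : Type*} [Fintype J] {y : J → K} (h : ∀ j, IsPowCombination q b (y j))
    (a : J → K) : IsPowCombination q (fun x : J × ι => b x.2 * a x.1) (∑ j, y j * a j) := by
  choose c hc using h
  refine ⟨fun x => c x.1 x.2, ?_⟩
  simp only [Fintype.sum_prod_type, hc, Finset.sum_mul, mul_assoc]

end IsPowCombination

end PowCombination

namespace PowerSeries

variable {R : Type*} [CommRing R]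

theorem pow_eq_map_iterateFrobenius_expand (p : ℕ) [ExpChar R p] (n : ℕ) (f : R⟦X⟧) :
    f ^ p ^ n =
      map (iterateFrobenius R p n) (expand (p ^ n) (pow_ne_zero n (expChar_ne_zero R p)) f) :=
  (MvPowerSeries.map_iterateFrobenius_expand p (expChar_ne_zero R p) f n).symm

theorem eq_sum_expand_mul_X_pow (q : ℕ) (hq : q ≠ 0) (f : R⟦X⟧) :
    f = ∑ i : Fin q, expand q hq (mk fun m => coeff (q * m + i) f) * X ^ (i : ℕ) := by
  ext k
  have hk : k % q < q := Nat.mod_lt k (Nat.pos_of_ne_zero hq)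
  simp only [map_sum, mul_comm _ (X ^ _), coeff_X_pow_mul', coeff_expand, coeff_mk]
  rw [Finset.sum_eq_single ⟨k % q, hk⟩]
  · have hdvd : q ∣ k - k % q := Nat.dvd_sub_mod k
    rw [if_pos (Nat.mod_le k q), if_pos hdvd, Nat.mul_div_cancel' hdvd,
      Nat.sub_add_cancel (Nat.mod_le k q)]
  · rintro i - hi
    split_ifs with hik hdvd
    · have hmod : (i : ℕ) % q = k % q := (Nat.modEq_iff_dvd' hik).mpr hdvd
      exact absurd (Fin.ext ((Nat.mod_eq_of_lt i.2).symm.trans hmod)) hi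
    all_goals rfl
  · simp

variable (p : ℕ) [ExpChar R p] (n : ℕ) {ι : Type*} [Fintype ι] {b : ι → R}

theorem isPowCombination_expand (hb : ∀ a, IsPowCombination (p ^ n) b a) (f : R⟦X⟧) :
    IsPowCombination (p ^ n) (fun i => C (b i))
      (expand (p ^ n) (pow_ne_zero n (expChar_ne_zero R p)) f) := by
  choose c hc using hb
  refine ⟨fun i => mk fun m => c (coeff m f) i, ?_⟩
  have hf : f = ∑ i, map (iterateFrobenius R p n) (mk fun m => c (coeff m f) i) * C (b i) := by
    ext m
    simp only [map_sum, coeff_mul_C, coeff_map, coeff_mk, iterateFrobenius_def]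
    exact hc (coeff m f)
  conv_lhs => rw [hf]
  simp only [map_sum, map_mul, expand_C, map_expand, pow_eq_map_iterateFrobenius_expand p n]

theorem isPowCombination_C_mul_X_pow (hb : ∀ a, IsPowCombination (p ^ n) b a) (f : R⟦X⟧) :
    IsPowCombination (p ^ n) (fun x : Fin (p ^ n) × ι => C (b x.2) * X ^ (x.1 : ℕ)) f := by
  rw [eq_sum_expand_mul_X_pow (p ^ n) (pow_ne_zero n (expChar_ne_zero R p)) f]
  exact IsPowCombination.sum_mul (fun i => isPowCombination_expand p n hb _) _

end PowerSeries

namespace LaurentSeries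

variable {R : Type*} [CommRing R] (p : ℕ) [ExpChar R p] (n : ℕ) {ι : Type*} [Fintype ι]
  {b : ι → R}

open HahnSeries in
theorem isPowCombination_C_mul_single (hb : ∀ a, IsPowCombination (p ^ n) b a) (f : R⸨X⸩) :
    IsPowCombination (p ^ n) (fun x : Fin (p ^ n) × ι => C (b x.2) * single (x.1 : ℤ) 1) f := by
  set q : ℕ := p ^ n
  have hq : (0 : ℤ) < q := by exact_mod_cast pow_pos (expChar_pos R p) n
  obtain ⟨r, hr⟩ : ∃ r : ℕ, (r : ℤ) = f.order % q :=
    ⟨_, Int.toNat_of_nonneg (Int.emod_nonneg _ hq.ne')⟩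
  have hf : f = single (f.order / q) 1 ^ q *
      ofPowerSeries ℤ R (PowerSeries.X ^ r * f.powerSeriesPart) := by
    conv_lhs => rw [← f.single_order_mul_powerSeriesPart]
    rw [map_mul, ofPowerSeries_X_pow, single_pow, ← mul_assoc, single_mul_single, one_pow, one_mul,
      hr, nsmul_eq_mul, Int.mul_ediv_add_emod]
  rw [hf]
  convert ((PowerSeries.isPowCombination_C_mul_X_pow p n hb _).map
    (ofPowerSeries ℤ R)).pow_mul _ using 2
  simp

end LaurentSeries

section LaurentTower

variable (E : ℕ → Type) [∀ j, Field (E j)]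

theorem charP_tower (estep : ∀ j, E (j + 1) ≃+* LaurentSeries (E j)) (p : ℕ) [CharP (E 0) p] :
    ∀ D, CharP (E D) p
  | 0 => inferInstance
  | D + 1 =>
    have := charP_tower estep p D
    charP_of_injective_ringHom (stepEmb E estep D).injective p

variable (estep : ∀ j, E (j + 1) ≃+* LaurentSeries (E j))

theorem estep_stepEmb (m : ℕ) (x : E m) : estep m (stepEmb E estep m x) = HahnSeries.C x := by
  simp [stepEmb]

theorem towerVar_eq_cast {D j : ℕ} (hj : j < D) (k : ℕ) (hk : j + 1 + k = D) :
    towerVar E estep D j hj = cast (congrArg E hk)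
      (upEmb E estep (j + 1) k ((estep j).symm (HahnSeries.single (1 : ℤ) (1 : E j)))) := by
  unfold towerVar
  refine eq_of_heq ((cast_heq _ _).trans (HEq.trans ?_ (cast_heq _ _).symm))
  rw [show D - (j + 1) = k by omega]

theorem towerVar_last (D : ℕ) :
    towerVar E estep (D + 1) D D.lt_succ_self =
      (estep D).symm (HahnSeries.single (1 : ℤ) (1 : E D)) :=
  towerVar_eq_cast E estep _ 0 rfl

theorem towerVar_castSucc {D : ℕ} (j : Fin D) :
    towerVar E estep (D + 1) j (j.isLt.trans D.lt_succ_self) =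
      stepEmb E estep D (towerVar E estep D j j.isLt) := by
  obtain ⟨j, hj⟩ := j
  obtain ⟨k, rfl⟩ : ∃ k, j + 1 + k = D := ⟨D - (j + 1), by omega⟩
  rw [towerVar_eq_cast E estep (D := j + 1 + k + 1) _ (k + 1) rfl,
    towerVar_eq_cast E estep _ k rfl]
  rfl

noncomputable def towerMonomial (D : ℕ) (e : Fin D → ℕ) : E D :=
  ∏ j : Fin D, towerVar E estep D j j.isLt ^ e j

theorem estep_towerMonomial (D : ℕ) (e : Fin (D + 1) → ℕ) :
    estep D (towerMonomial E estep (D + 1) e) =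
      HahnSeries.C (towerMonomial E estep D (Fin.init e)) *
        HahnSeries.single (e (Fin.last D) : ℤ) 1 := by
  simp only [towerMonomial, Fin.prod_univ_castSucc, Fin.val_castSucc, Fin.val_last, map_mul,
    map_prod, map_pow, towerVar_castSucc, estep_stepEmb, towerVar_last, RingEquiv.apply_symm_apply,
    HahnSeries.single_pow, one_pow, nsmul_eq_mul, mul_one, Fin.init]

theorem isPowCombination_towerMonomial (p : ℕ) [Fact p.Prime] [Finite (E 0)] [CharP (E 0) p]
    (n D : ℕ) (y : E D) :
    IsPowCombination (p ^ n) (fun iv : Fin D → Fin (p ^ n) => towerMonomial E estep D (iv ·))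
      y := by
  have hchar := charP_tower E estep p
  induction D with
  | zero =>
    obtain ⟨c, rfl⟩ := (bijective_iterateFrobenius (E 0) p n).2 y
    exact ⟨fun _ => c, by simp [towerMonomial, iterateFrobenius_def]⟩
  | succ D ih =>
    have := hchar D
    have hL := LaurentSeries.isPowCombination_C_mul_single p n ih (estep D y)
    convert (hL.map (estep D).symm.toRingHom).comp_equiv
      (Fin.snocEquiv fun _ => Fin (p ^ n)).symm using 1
    · funext iv
      apply (estep D).injective
      simp only [estep_towerMonomial, Function.comp_apply, RingEquiv.toRingHom_eq_coe,
        RingHom.coe_coe, Fin.snocEquiv_symm_apply, RingEquiv.apply_symm_apply]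
      rfl
    · simp

end LaurentTower

namespace IsDiscVal

variable {F : Type*} [Field F] {v : F → WithTop ℤ}

theorem ne_zero_of_v_eq_one (hv : IsDiscVal v) {π : F} (hπ : v π = 1) : π ≠ 0 := by
  rintro rfl
  simp [hv.v_zero] at hπ

theorem le_v_pow_mul (hv : IsDiscVal v) {π : F} (hπ : v π = 1) (k : ℕ) {w : F} (hw : 0 ≤ v w) :
    ((k : ℤ) : WithTop ℤ) ≤ v (π ^ k * w) := by
  induction k with
  | zero => simpa [hv.v_one] using hw
  | succ k ih =>
    rw [pow_succ', mul_assoc, hv.map_mul, hπ, Nat.cast_succ, add_comm, WithTop.coe_add]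
    exact add_le_add WithTop.coe_one.le ih

theorem exists_mem_subring_eq_mul (hv : IsDiscVal v) {π : F} (hπ : v π = 1) {y : F}
    (hy : 1 ≤ v y) : ∃ w ∈ hv.subring, y = π * w := by
  have hπ0 := hv.ne_zero_of_v_eq_one hπ
  refine ⟨y / π, ?_, (mul_div_cancel₀ y hπ0).symm⟩
  rw [← mul_div_cancel₀ y hπ0, hv.map_mul, hπ] at hy
  exact (WithTop.add_le_add_iff_left WithTop.one_ne_top).mp (by simpa using hy)

theorem exists_expansion (hv : IsDiscVal v) {π : F} (hπ : v π = 1) {A : Type*}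
    (digit : A → F) (hdigit : ∀ z ∈ hv.subring, ∃ a, 1 ≤ v (z - digit a)) (x : hv.subring) :
    ∃ a : ℕ → A, ∀ m : ℕ,
      ((m : ℤ) : WithTop ℤ) ≤ v (x - ∑ k ∈ Finset.range m, digit (a k) * π ^ k) := by
  have step : ∀ z : hv.subring, ∃ (a : A) (w : hv.subring), (z : F) = digit a + π * w := by
    intro z
    obtain ⟨a, ha⟩ := hdigit z z.2
    obtain ⟨w, hw, hzw⟩ := hv.exists_mem_subring_eq_mul hπ ha
    exact ⟨a, ⟨w, hw⟩, by rw [← hzw]; ring⟩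
  choose digitOf rest hrest using step
  refine ⟨fun k => digitOf (rest^[k] x), fun m => ?_⟩
  have htail : ∀ m, (x : F) - ∑ k ∈ Finset.range m, digit (digitOf (rest^[k] x)) * π ^ k =
      π ^ m * rest^[m] x := by
    intro m
    induction m with
    | zero => simp
    | succ m ih =>
      rw [Finset.sum_range_succ, ← sub_sub, ih, Function.iterate_succ_apply', hrest (rest^[m] x)]
      ring
  rw [htail]
  exact hv.le_v_pow_mul hπ m (rest^[m] x).2

end IsDiscVal

theorem additive_frobenius_series_representation_general
    (p : ℕ) (hp : p.Prime) (d : ℕ)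
    (𝓛 : Type*) [Field 𝓛]
    (v : 𝓛 → WithTop ℤ) (hv : IsDiscVal v)
    (π𝓛 : 𝓛) (hπ : v π𝓛 = 1)
    (𝔽 : Type) [Field 𝔽] [Fintype 𝔽] [CharP 𝔽 p]
    (E : ℕ → Type) [∀ j, Field (E j)] (estep : ∀ j, E (j + 1) ≃+* LaurentSeries (E j))
    (e0 : E 0 ≃+* 𝔽)
    (res : hv.subring →+* E (d - 1))
    (hres_surj : Function.Surjective res)
    (hres_ker : ∀ x : hv.subring, res x = 0 ↔ 1 ≤ v (x : 𝓛))
    (T : Fin (d - 1) → hv.subring)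
    (hT : ∀ j : Fin (d - 1), res (T j) = towerVar E estep (d - 1) j j.isLt)
    (n : ℕ) :
    ∀ x : hv.subring,
      ∃ γ : ℕ → (Fin (d - 1) → Fin (p ^ n)) → hv.subring,
        ∀ m : ℕ,
          ((m : ℤ) + 1 : WithTop ℤ) ≤ v ((x : 𝓛) -
            ∑ k ∈ Finset.range (m + 1), ∑ iv : Fin (d - 1) → Fin (p ^ n),
              ((γ k iv : 𝓛)) ^ (p ^ n) *
                (∏ j : Fin (d - 1), ((T j : 𝓛)) ^ ((iv j : ℕ))) * π𝓛 ^ k) := by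
  intro x
  have : Fact p.Prime := ⟨hp⟩
  have : Finite (E 0) := Finite.of_equiv 𝔽 e0.toEquiv.symm
  have : CharP (E 0) p :=
    charP_of_injective_ringHom (f := e0.symm.toRingHom) e0.symm.injective p
  let monomial (iv : Fin (d - 1) → Fin (p ^ n)) : hv.subring := ∏ j, T j ^ (iv j : ℕ)
  have hres_monomial (iv) : res (monomial iv) = towerMonomial E estep (d - 1) (iv ·) := by
    simp only [monomial, towerMonomial, map_prod, map_pow, hT]
  have hdigit (z : 𝓛) (hz : z ∈ hv.subring) : ∃ γ : (Fin (d - 1) → Fin (p ^ n)) → hv.subring,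
      1 ≤ v (z - ∑ iv, (γ iv : 𝓛) ^ p ^ n * (monomial iv : 𝓛)) := by
    obtain ⟨c, hc⟩ := isPowCombination_towerMonomial E estep p n (d - 1) (res ⟨z, hz⟩)
    choose lift hlift using hres_surj
    refine ⟨lift ∘ c, ?_⟩
    have := (hres_ker (⟨z, hz⟩ - ∑ iv, lift (c iv) ^ p ^ n * monomial iv)).mp
      (by simp [hc, hlift, hres_monomial])
    simpa using this
  obtain ⟨γ, hγ⟩ := hv.exists_expansion hπ _ hdigit x
  refine ⟨γ, fun m => ?_⟩
  convert hγ (m + 1) using 2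
  · push_cast; rfl
  · simp [monomial, Finset.sum_mul]

/-- Let `𝓛` be a `d`-dimensional local field of mixed characteristic with
system of local uniformizers `T_1, …, T_{d−1}, π_𝓛` (its residue field, presented as the top
of a Laurent series tower over a finite field `𝔽`, is `𝔽((T̄_1))…((T̄_{d−1}))`), and fix
`n ≥ 1`.  Then every `x ∈ O_𝓛` can be written as a `v_𝓛`-convergent series
`x = Σ_{k=0}^∞ Σ_{ī ∈ J_n} γ_{ī,k}^{p^n} · T_1^{i_1} ⋯ T_{d−1}^{i_{d−1}} · π_𝓛^k` with
`γ_{ī,k} ∈ O_𝓛`: for every `m ≥ 0` the difference between `x` and the partial sum over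
`k ≤ m` lies in `π_𝓛^{m+1} O_𝓛`. -/
theorem additive_frobenius_series_representation
    (p : ℕ) (hp : p.Prime) (d : ℕ) (hd : 1 ≤ d)
    (𝓛 : Type*) [Field 𝓛] [CharZero 𝓛]
    (v : 𝓛 → WithTop ℤ) (hv : IsDiscVal v)
    (π𝓛 : 𝓛) (hπ : v π𝓛 = 1)
    (𝔽 : Type) [Field 𝔽] [Fintype 𝔽] [CharP 𝔽 p]
    (E : ℕ → Type) [∀ j, Field (E j)] (estep : ∀ j, E (j + 1) ≃+* LaurentSeries (E j))
    (e0 : E 0 ≃+* 𝔽)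
    (res : hv.subring →+* E (d - 1))
    (hres_surj : Function.Surjective res)
    (hres_ker : ∀ x : hv.subring, res x = 0 ↔ 1 ≤ v (x : 𝓛))
    (T : Fin (d - 1) → hv.subring)
    (hT : ∀ j : Fin (d - 1), res (T j) = towerVar E estep (d - 1) j j.isLt)
    (n : ℕ) (hn : 1 ≤ n) :
    ∀ x : hv.subring,
      ∃ γ : ℕ → (Fin (d - 1) → Fin (p ^ n)) → hv.subring,
        ∀ m : ℕ,
          ((m : ℤ) + 1 : WithTop ℤ) ≤ v ((x : 𝓛) -
            ∑ k ∈ Finset.range (m + 1), ∑ iv : Fin (d - 1) → Fin (p ^ n),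
              ((γ k iv : 𝓛)) ^ (p ^ n) *
                (∏ j : Fin (d - 1), ((T j : 𝓛)) ^ ((iv j : ℕ))) * π𝓛 ^ k) :=
  additive_frobenius_series_representation_general p hp d 𝓛 v hv π𝓛 hπ 𝔽 E estep e0 res hres_surj
    hres_ker T hT n
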